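/- arXiv:2005.07678 — 4 statements merged into one kernel-verified Lean document; each statement's English description precedes it below -/
import Mathlib

section
/- For any vectors p, q ∈ ℝ_+^n with ‖p‖₁, ‖q‖₁ > 0 and any F ≥ 1, the normalized vectors satisfy dd_{2F²}(p/‖p‖₁, q/‖q‖₁) + dd_{2F²}(q/‖q‖₁, p/‖p‖₁) ≤ 4·(dd_F(p,q)/‖p‖₁ + dd_F(q,p)/‖q‖₁). -/
open Finset

/-- The `F`-distortion resilient distance: `dd_F(p,q) = Σ_{i : p_i > F·q_i} p_i`. -/
noncomputable def dd {n : ℕ} (F : ℝ) (p q : Fin n → ℝ) : ℝ :=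
  ∑ i ∈ univ.filter (fun i => F * q i < p i), p i

lemma dd_nonneg' {n : ℕ} (F : ℝ) (p q : Fin n → ℝ) (hp : ∀ i, 0 ≤ p i) : 0 ≤ dd F p q :=
  Finset.sum_nonneg fun i _ => hp i

lemma dd_le_sum' {n : ℕ} (F : ℝ) (p q : Fin n → ℝ) (hp : ∀ i, 0 ≤ p i) :
    dd F p q ≤ ∑ i, p i :=
  Finset.sum_le_sum_of_subset_of_nonneg (Finset.filter_subset _ _) (fun i _ _ => hp i)

lemma sum_le_dd_add' {n : ℕ} (F : ℝ) (p q : Fin n → ℝ) (hq : ∀ i, 0 ≤ q i) (hF : 0 ≤ F) :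
    ∑ i, p i ≤ dd F p q + F * ∑ i, q i := by
  have h := Finset.sum_filter_add_sum_filter_not Finset.univ (fun i => F * q i < p i) p
  have h2 : ∑ i ∈ Finset.univ.filter (fun i => ¬ (F * q i < p i)), p i
      ≤ F * ∑ i, q i := by
    rw [Finset.mul_sum]
    calc ∑ i ∈ Finset.univ.filter (fun i => ¬ (F * q i < p i)), p i
        ≤ ∑ i ∈ Finset.univ.filter (fun i => ¬ (F * q i < p i)), F * q i :=
          Finset.sum_le_sum fun i hi => by
            simpa using not_lt.mp (Finset.mem_filter.mp hi).2
      _ ≤ ∑ i, F * q i := Finset.sum_le_sum_of_subset_of_nonneg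
          (Finset.filter_subset _ _) (fun i _ _ => mul_nonneg hF (hq i))
  unfold dd
  linarith [h, h2]

lemma dd_norm_aux {n : ℕ} (F : ℝ) (hF : 1 ≤ F) (p q : Fin n → ℝ)
    (hp : ∀ i, 0 ≤ p i) (hq : ∀ i, 0 ≤ q i)
    (hpn : 0 < ∑ i, p i) (hqn : 0 < ∑ i, q i)
    (hc : ∑ i, q i ≤ 2 * F * ∑ i, p i) :
    dd (2 * F ^ 2) (fun i => p i / ∑ j, p j) (fun i => q i / ∑ j, q j)
      ≤ dd F p q / ∑ i, p i := by
  have hF0 : (0:ℝ) < F := lt_of_lt_of_le one_pos hF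
  unfold dd
  rw [← Finset.sum_div]
  rw [div_le_div_iff_of_pos_right hpn]
  refine Finset.sum_le_sum_of_subset_of_nonneg ?_ (fun i _ _ => hp i)
  intro i hi
  simp only [Finset.mem_filter, Finset.mem_univ, true_and] at hi ⊢
  rw [← mul_div_assoc, div_lt_div_iff₀ hqn hpn] at hi
  nlinarith [mul_le_mul_of_nonneg_left hc (hp i), mul_pos hF0 hpn, hp i, hq i, hi]

/-- For nonnegative vectors with positive ℓ₁ norms,
`dd_{2F²}(p/‖p‖₁, q/‖q‖₁) + dd_{2F²}(q/‖q‖₁, p/‖p‖₁)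
  ≤ 4·(dd_F(p,q)/‖p‖₁ + dd_F(q,p)/‖q‖₁)`. -/
theorem dd_norm {n : ℕ} (F : ℝ) (hF : 1 ≤ F) (p q : Fin n → ℝ)
    (hp : ∀ i, 0 ≤ p i) (hq : ∀ i, 0 ≤ q i)
    (hpn : 0 < ∑ i, p i) (hqn : 0 < ∑ i, q i) :
    dd (2 * F ^ 2) (fun i => p i / ∑ j, p j) (fun i => q i / ∑ j, q j)
      + dd (2 * F ^ 2) (fun i => q i / ∑ j, q j) (fun i => p i / ∑ j, p j)
    ≤ 4 * (dd F p q / ∑ i, p i + dd F q p / ∑ i, q i) := by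
  have hF0 : (0:ℝ) < F := lt_of_lt_of_le one_pos hF
  have hpn' : (∑ i, p i) ≠ 0 := ne_of_gt hpn
  have hqn' : (∑ i, q i) ≠ 0 := ne_of_gt hqn
  have hAn : 0 ≤ dd F p q := dd_nonneg' F p q hp
  have hBn : 0 ≤ dd F q p := dd_nonneg' F q p hq
  have hA1 : 0 ≤ dd F p q / ∑ i, p i := div_nonneg hAn hpn.le
  have hB1 : 0 ≤ dd F q p / ∑ i, q i := div_nonneg hBn hqn.le
  have hpdiv : ∀ i, 0 ≤ p i / ∑ j, p j := fun i => div_nonneg (hp i) hpn.le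
  have hqdiv : ∀ i, 0 ≤ q i / ∑ j, q j := fun i => div_nonneg (hq i) hqn.le
  have hL1 : dd (2 * F ^ 2) (fun i => p i / ∑ j, p j) (fun i => q i / ∑ j, q j) ≤ 1 := by
    have := dd_le_sum' (2 * F ^ 2) (fun i => p i / ∑ j, p j)
      (fun i => q i / ∑ j, q j) hpdiv
    rwa [← Finset.sum_div, div_self hpn'] at this
  have hL2 : dd (2 * F ^ 2) (fun i => q i / ∑ j, q j) (fun i => p i / ∑ j, p j) ≤ 1 := by
    have := dd_le_sum' (2 * F ^ 2) (fun i => q i / ∑ j, q j)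
      (fun i => p i / ∑ j, p j) hqdiv
    rwa [← Finset.sum_div, div_self hqn'] at this
  by_cases h1 : ∑ i, q i ≤ 2 * F * ∑ i, p i
  · by_cases h2 : ∑ i, p i ≤ 2 * F * ∑ i, q i
    · have k1 := dd_norm_aux F hF p q hp hq hpn hqn h1
      have k2 := dd_norm_aux F hF q p hq hp hqn hpn h2
      linarith
    · -- ∑ p > 2F ∑ q, so dd F p q > (∑ p)/2
      push_neg at h2
      have key : ∑ i, p i ≤ dd F p q + F * ∑ i, q i :=
        sum_le_dd_add' F p q hq hF0.le
      have hhalf : (∑ i, p i) / 2 < dd F p q := by linarith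
      have : (1:ℝ)/2 < dd F p q / ∑ i, p i := by
        rw [lt_div_iff₀ hpn]; linarith
      linarith
  · push_neg at h1
    have key : ∑ i, q i ≤ dd F q p + F * ∑ i, p i :=
      sum_le_dd_add' F q p hp hF0.le
    have hhalf : (∑ i, q i) / 2 < dd F q p := by linarith
    have : (1:ℝ)/2 < dd F q p / ∑ i, q i := by
      rw [lt_div_iff₀ hqn]; linarith
    linarith
end

section
/- For any nonnegative reals a_1,…,a_m, b_1,…,b_m and any F ≥ 1, we have dd_{2F}(Σᵢ aᵢ, Σᵢ bᵢ) ≤ 2·Σᵢ dd_F(aᵢ, bᵢ). -/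
open Finset

/-- The scalar `F`-distortion resilient distance:
`dd_F(a,b) = a` if `a > F·b` and `0` otherwise. -/
noncomputable def ddS (F a b : ℝ) : ℝ := if F * b < a then a else 0

/-- For nonnegative reals `a_1,…,a_m, b_1,…,b_m` and `F ≥ 1`,
`dd_{2F}(Σᵢ aᵢ, Σᵢ bᵢ) ≤ 2·Σᵢ dd_F(aᵢ, bᵢ)`. -/
theorem dd_sum_triangle (m : ℕ) (F : ℝ) (hF : 1 ≤ F)
    (a b : Fin m → ℝ) (ha : ∀ i, 0 ≤ a i) (hb : ∀ i, 0 ≤ b i) :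
    ddS (2 * F) (∑ i, a i) (∑ i, b i) ≤ 2 * ∑ i, ddS F (a i) (b i) := by
  unfold ddS
  have hsum : ∑ i, (if F * b i < a i then a i else (0:ℝ))
      = ∑ i ∈ univ.filter (fun i => F * b i < a i), a i := (sum_filter _ _).symm
  split_ifs with h
  · -- 2F Σb < Σa
    have h1 : ∑ i ∈ univ.filter (fun i => ¬ F * b i < a i), a i ≤ F * ∑ i, b i := by
      calc ∑ i ∈ univ.filter (fun i => ¬ F * b i < a i), a i
          ≤ ∑ i ∈ univ.filter (fun i => ¬ F * b i < a i), F * b i :=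
            sum_le_sum fun i hi => le_of_not_gt (mem_filter.1 hi).2
        _ ≤ ∑ i, F * b i := sum_le_sum_of_subset_of_nonneg (filter_subset _ _)
            (fun i _ _ => mul_nonneg (by linarith) (hb i))
        _ = F * ∑ i, b i := (mul_sum _ _ _).symm
    have h2 : ∑ i ∈ univ.filter (fun i => F * b i < a i), a i
        + ∑ i ∈ univ.filter (fun i => ¬ F * b i < a i), a i = ∑ i, a i :=
      sum_filter_add_sum_filter_not _ _ _
    rw [hsum]
    linarith
  · have : 0 ≤ ∑ i, (if F * b i < a i then a i else (0:ℝ)) :=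
      sum_nonneg fun i _ => by split_ifs; exacts [ha i, le_rfl]
    linarith
end

section
/- For any nonnegative reals x, y, any F ≥ 1, any q ≥ 1 and parameters 0 < δ ≤ 1, γ > 0, the soft thresholding transformation satisfies dd_{F^q}(T(x), T(y)) ≤ dd_F(x,y) + γ·(δF)^q, where T = T^q_{δ,γ}. -/
/-- The soft thresholding transformation `T^q_{δ,γ}`. -/
noncomputable def softT (q δ γ x : ℝ) : ℝ :=
  if γ ≤ x then x else if x < δ * γ then 0 else γ * (x / γ) ^ q

lemma softT_nonneg (q δ γ x : ℝ) (hx : 0 ≤ x) (hγ : 0 < γ) :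
    0 ≤ softT q δ γ x := by
  unfold softT
  split_ifs with h1 h2
  · exact hx
  · exact le_rfl
  · positivity

lemma softT_le (q δ γ x : ℝ) (hx : 0 ≤ x) (hq : 1 ≤ q) (hγ : 0 < γ)
    (hδ0 : 0 < δ) : softT q δ γ x ≤ x := by
  unfold softT
  split_ifs with h1 h2
  · exact le_rfl
  · exact hx
  · push_neg at h1 h2
    have hx0 : 0 < x := lt_of_lt_of_le (by positivity) h2
    have h01 : 0 < x / γ := by positivity
    have h11 : x / γ ≤ 1 := by
      rw [div_le_one hγ]; exact h1.le
    have : (x / γ) ^ q ≤ (x / γ) ^ (1:ℝ) :=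
      Real.rpow_le_rpow_of_exponent_ge h01 h11 hq
    rw [Real.rpow_one] at this
    calc γ * (x / γ) ^ q ≤ γ * (x / γ) := by nlinarith
    _ = x := by field_simp

/-- For nonnegative reals `x, y`, `F ≥ 1`, `q ≥ 1`, `0 < δ ≤ 1`, `γ > 0`:
`dd_{F^q}(T(x), T(y)) ≤ dd_F(x,y) + γ·(δF)^q` for `T = T^q_{δ,γ}`. -/
theorem dd_softT (x y F q δ γ : ℝ)
    (hx : 0 ≤ x) (hy : 0 ≤ y) (hF : 1 ≤ F) (hq : 1 ≤ q)
    (hδ0 : 0 < δ) (hδ1 : δ ≤ 1) (hγ : 0 < γ) :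
    ddS (F ^ q) (softT q δ γ x) (softT q δ γ y)
      ≤ ddS F x y + γ * (δ * F) ^ q := by
  have hq0 : (0:ℝ) < q := lt_of_lt_of_le one_pos hq
  have hTx0 : 0 ≤ softT q δ γ x := softT_nonneg q δ γ x hx hγ
  have hTy0 : 0 ≤ softT q δ γ y := softT_nonneg q δ γ y hy hγ
  have hdd0 : 0 ≤ ddS F x y := by
    unfold ddS; split_ifs <;> [exact hx; exact le_rfl]
  have hpos : 0 ≤ γ * (δ * F) ^ q := by positivity
  have hFleFq : F ≤ F ^ q := by
    have := Real.rpow_le_rpow_of_exponent_le hF hq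
    rwa [Real.rpow_one] at this
  rw [ddS]
  by_cases hout : F ^ q * softT q δ γ y < softT q δ γ x
  swap
  · rw [if_neg hout]; linarith
  rw [if_pos hout]
  rw [ddS]
  by_cases hxy : F * y < x
  · rw [if_pos hxy]
    have := softT_le q δ γ x hx hq hγ hδ0
    linarith
  rw [if_neg hxy]
  push_neg at hxy
  -- now show softT x ≤ 0 + γ (δF)^q, using hout
  by_cases hy1 : γ ≤ y
  · exfalso
    have hTy : softT q δ γ y = y := by rw [softT, if_pos hy1]
    have hTx := softT_le q δ γ x hx hq hγ hδ0
    have : F * y ≤ F ^ q * y := by nlinarith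
    rw [hTy] at hout; linarith
  by_cases hy2 : y < δ * γ
  · -- Ty = 0
    have hTy : softT q δ γ y = 0 := by rw [softT, if_neg hy1, if_pos hy2]
    rw [hTy, mul_zero] at hout
    have hxb : x ≤ F * (δ * γ) := le_trans hxy (by nlinarith)
    rw [softT]
    split_ifs with h1 h2
    · -- x ≥ γ : then δF > 1
      have h1F : 1 ≤ δ * F := by nlinarith
      have : δ * F ≤ (δ * F) ^ q := by
        have := Real.rpow_le_rpow_of_exponent_le h1F hq
        rwa [Real.rpow_one] at this
      nlinarith
    · linarith
    · push_neg at h1 h2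
      have hbase : x / γ ≤ δ * F := by
        rw [div_le_iff₀ hγ]; nlinarith
      have := Real.rpow_le_rpow (by positivity) hbase hq0.le
      nlinarith
  · -- δγ ≤ y < γ : Ty = γ (y/γ)^q; derive contradiction
    exfalso
    push_neg at hy1 hy2
    have hTy : softT q δ γ y = γ * (y / γ) ^ q := by
      rw [softT, if_neg (not_le.mpr hy1), if_neg (not_lt.mpr hy2)]
    have hkey : F ^ q * softT q δ γ y = γ * (F * y / γ) ^ q := by
      rw [hTy]
      have : (F * y / γ) ^ q = F ^ q * (y / γ) ^ q := by
        rw [mul_div_assoc, Real.mul_rpow (by linarith) (by positivity)]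
      rw [this]; ring
    rw [hkey] at hout
    have hFy0 : 0 ≤ F * y / γ := by positivity
    have hTx := softT_le q δ γ x hx hq hγ hδ0
    rw [softT] at hout
    split_ifs at hout with h1 h2
    · -- x ≥ γ, so F*y/γ ≥ x/γ ≥ 1
      have hb1 : 1 ≤ F * y / γ := by
        rw [le_div_iff₀ hγ]; nlinarith
      have : F * y / γ ≤ (F * y / γ) ^ q := by
        have := Real.rpow_le_rpow_of_exponent_le hb1 hq
        rwa [Real.rpow_one] at this
      have : F * y ≤ γ * (F * y / γ) ^ q := by
        calc F * y = γ * (F * y / γ) := by field_simp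
        _ ≤ γ * (F * y / γ) ^ q := by nlinarith
      linarith
    · have : (0:ℝ) ≤ γ * (F * y / γ) ^ q := by positivity
      linarith
    · push_neg at h1 h2
      have hbase : x / γ ≤ F * y / γ := by
        exact div_le_div_of_nonneg_right hxy hγ.le
      have := Real.rpow_le_rpow (by positivity) hbase hq0.le
      nlinarith
end

section
/- Let S, S' be finite sets of intervals, χ a color with masses μ(I, χ) ≥ 0, and for each interval I and cost ĉ define den(I, S)_ĉ = Σ_{J ∈ S : ad(I,J) ≤ ĉ} μ(J, χ). Suppose ad is a metric. Then for each cost ĉ: Σ_{I ∈ S} (μ(I,χ)/μ(S,χ)) · den(I, S')_ĉ / den(I, S)_{2ĉ} ≤ μ(S',χ)/μ(S,χ), where μ(T,χ) = Σ_{I∈T} μ(I,χ) > 0 and den(I,S)_{2ĉ} > 0 for I ∈ S (which holds since I ∈ N_{2ĉ}(I)). -/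
open Finset

/-- For finite interval sets `S, S'`, nonnegative masses `μ`, a metric `ad`
(modeled by `dist`), and densities `den(I,T)_r = Σ_{J∈T, ad(I,J)≤r} μ(J)`:
`Σ_{I∈S} (μ(I)/μ(S)) · den(I,S')_cHat / den(I,S)_{2cHat} ≤ μ(S')/μ(S)`. -/
theorem density_skew_expectation {M : Type*} [MetricSpace M]
    (μ : M → ℝ) (hμ : ∀ x, 0 ≤ μ x)
    (S S' : Finset M) (cHat : ℝ) (hcHat : 0 ≤ cHat)
    (hS : 0 < ∑ I ∈ S, μ I)
    (hden : ∀ I ∈ S, 0 < ∑ J ∈ S.filter (fun J => dist I J ≤ 2 * cHat), μ J) :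
    ∑ I ∈ S, (μ I / ∑ I' ∈ S, μ I') *
        ((∑ J ∈ S'.filter (fun J => dist I J ≤ cHat), μ J) /
          (∑ J ∈ S.filter (fun J => dist I J ≤ 2 * cHat), μ J))
      ≤ (∑ J ∈ S', μ J) / (∑ I ∈ S, μ I) := by
  have key : ∑ I ∈ S, μ I *
      ((∑ J ∈ S'.filter (fun J => dist I J ≤ cHat), μ J) /
        (∑ J ∈ S.filter (fun J => dist I J ≤ 2 * cHat), μ J))
      ≤ ∑ J ∈ S', μ J := by
    have swap : ∑ I ∈ S, μ I *
        ((∑ J ∈ S'.filter (fun J => dist I J ≤ cHat), μ J) /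
          (∑ J ∈ S.filter (fun J => dist I J ≤ 2 * cHat), μ J))
        = ∑ J ∈ S', μ J * ∑ I ∈ S.filter (fun I => dist I J ≤ cHat),
            μ I / (∑ J' ∈ S.filter (fun J' => dist I J' ≤ 2 * cHat), μ J') := by
      simp only [Finset.sum_div, Finset.sum_filter, Finset.mul_sum, Finset.sum_mul]
      rw [Finset.sum_comm]
      apply Finset.sum_congr rfl; intro I _
      apply Finset.sum_congr rfl; intro J _
      by_cases h : dist J I ≤ cHat <;> simp [h] <;> ring
    rw [swap]
    apply Finset.sum_le_sum
    intro J _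
    have hsum1 : ∑ I ∈ S.filter (fun I => dist I J ≤ cHat),
        μ I / (∑ J' ∈ S.filter (fun J' => dist I J' ≤ 2 * cHat), μ J') ≤ 1 := ?_
    · calc μ J * _ ≤ μ J * 1 := mul_le_mul_of_nonneg_left hsum1 (hμ J)
        _ = μ J := mul_one _
    -- the inner sum is ≤ 1
    set DJ := ∑ I ∈ S.filter (fun I => dist I J ≤ cHat), μ I with hDJ
    rcases eq_or_lt_of_le (Finset.sum_nonneg (fun I (_ : I ∈ S.filter (fun I => dist I J ≤ cHat)) => hμ I) : 0 ≤ DJ) with hD0 | hD0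
    · -- all μ I in the filter are zero
      have hz : ∀ I ∈ S.filter (fun I => dist I J ≤ cHat), μ I = 0 := by
        intro I hI
        exact le_antisymm (by
          have := (Finset.sum_eq_zero_iff_of_nonneg
            (fun I (_ : I ∈ S.filter (fun I => dist I J ≤ cHat)) => hμ I)).mp hD0.symm
          exact le_of_eq (this I hI)) (hμ I)
      calc ∑ I ∈ S.filter (fun I => dist I J ≤ cHat),
            μ I / (∑ J' ∈ S.filter (fun J' => dist I J' ≤ 2 * cHat), μ J')
          = 0 := by
            apply Finset.sum_eq_zero; intro I hI; rw [hz I hI]; simp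
        _ ≤ 1 := zero_le_one
    · -- DJ > 0 case
      have hle : ∀ I ∈ S.filter (fun I => dist I J ≤ cHat),
          DJ ≤ ∑ J' ∈ S.filter (fun J' => dist I J' ≤ 2 * cHat), μ J' := by
        intro I hI
        obtain ⟨hIS, hIJ⟩ := Finset.mem_filter.mp hI
        apply Finset.sum_le_sum_of_subset_of_nonneg
        · intro I' hI'
          obtain ⟨hI'S, hI'J⟩ := Finset.mem_filter.mp hI'
          refine Finset.mem_filter.mpr ⟨hI'S, ?_⟩
          calc dist I I' ≤ dist I J + dist J I' := dist_triangle _ _ _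
            _ = dist I J + dist I' J := by rw [dist_comm J I']
            _ ≤ cHat + cHat := add_le_add hIJ hI'J
            _ = 2 * cHat := by ring
        · intro i _ _; exact hμ i
      calc ∑ I ∈ S.filter (fun I => dist I J ≤ cHat),
            μ I / (∑ J' ∈ S.filter (fun J' => dist I J' ≤ 2 * cHat), μ J')
          ≤ ∑ I ∈ S.filter (fun I => dist I J ≤ cHat), μ I / DJ := by
            apply Finset.sum_le_sum
            intro I hI
            exact div_le_div_of_nonneg_left (hμ I) hD0 (hle I hI)
        _ = DJ / DJ := by rw [← Finset.sum_div]
        _ = 1 := div_self (ne_of_gt hD0)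
  calc ∑ I ∈ S, (μ I / ∑ I' ∈ S, μ I') *
        ((∑ J ∈ S'.filter (fun J => dist I J ≤ cHat), μ J) /
          (∑ J ∈ S.filter (fun J => dist I J ≤ 2 * cHat), μ J))
      = (∑ I ∈ S, μ I *
        ((∑ J ∈ S'.filter (fun J => dist I J ≤ cHat), μ J) /
          (∑ J ∈ S.filter (fun J => dist I J ≤ 2 * cHat), μ J))) / (∑ I ∈ S, μ I) := by
        rw [Finset.sum_div]
        apply Finset.sum_congr rfl; intro I _; ring
    _ ≤ (∑ J ∈ S', μ J) / (∑ I ∈ S, μ I) := by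
        exact div_le_div_of_nonneg_right key hS.le
end
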